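/- arXiv:1805.01237 — 3 statements merged into one kernel-verified Lean document; each statement's English description precedes it below -/
import Mathlib

section
/- Let K ≥ 1 be an integer, t ≥ 1 an integer, and let ε_1, …, ε_t be real numbers with ε_n ∈ (0,1] for all n. On a probability space, let J_1, …, J_t be independent random variables taking values in {0, 1, …, K} such that P(J_n = a) = ε_n/K for every a ∈ {1, …, K} (and P(J_n = 0) = 1 − ε_n). For each a ∈ {1, …, K} let T_a(t) = #{ n ≤ t : J_n = a }. Set x_t = (1/(2K)) · Σ_{n=1}^t ε_n. Then P( T_a(t) ≥ x_t for every a ∈ {1, …, K} ) ≥ 1 − K·exp(−x_t/5). -/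
/-!
For a fixed arm `a`, the count `T_a(t)` is a sum of independent indicators of the events
`{J_n = a}`, whose probabilities `ε_n / K` add up to `2 x_t`. The Chernoff bound at `θ = -log 2`
gives `P(T_a(t) ≤ x_t) ≤ exp(-(1 - log 2) x_t) ≤ exp(-x_t / 5)`, and a union bound over the `K`
arms finishes the proof.
-/

open MeasureTheory ProbabilityTheory Real Finset
open scoped ENNReal

lemma Finset.natCast_card_filter_eq_sum_indicator {Ω ι R : Type*} [AddCommMonoidWithOne R]
    (s : Finset ι) (p : ι → Ω → Prop) [∀ i ω, Decidable (p i ω)] (ω : Ω) :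
    (#{i ∈ s | p i ω} : R) = ∑ i ∈ s, {ω | p i ω}.indicator 1 ω := by
  simp only [natCast_card_filter, Set.indicator, Set.mem_ofPred_eq, Pi.one_apply]

lemma Real.exp_mul_indicator_one {Ω : Type*} (A : Set Ω) (θ : ℝ) (ω : Ω) :
    exp (θ * A.indicator 1 ω) = 1 + (exp θ - 1) * A.indicator 1 ω := by
  by_cases h : ω ∈ A <;> simp [h]

section

variable {Ω ι : Type*} [MeasurableSpace Ω] {μ : Measure Ω}

lemma ProbabilityTheory.iIndepFun.iIndepSet_preimage {β : Type*} [MeasurableSpace β]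
    {f : ι → Ω → β} (hf : iIndepFun f μ) (hmeas : ∀ i, Measurable (f i))
    {B : ι → Set β} (hB : ∀ i, MeasurableSet (B i)) :
    iIndepSet (fun i ↦ f i ⁻¹' B i) μ :=
  (iIndepSet_iff_meas_biInter fun i ↦ hmeas i (hB i)).2 fun _ ↦
    hf.meas_biInter fun i _ ↦ ⟨B i, hB i, rfl⟩

variable [IsProbabilityMeasure μ]

lemma mgf_indicator_one {A : Set Ω} (hA : MeasurableSet A) (θ : ℝ) :
    mgf (A.indicator 1) μ θ = 1 + (exp θ - 1) * μ.real A := by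
  have hint : Integrable (A.indicator (1 : Ω → ℝ)) μ := (integrable_const 1).indicator hA
  simp only [mgf, exp_mul_indicator_one]
  rw [integral_add (integrable_const 1) (hint.const_mul _), integral_const_mul,
    integral_indicator_one hA]
  simp

lemma mgf_indicator_one_le_exp {A : Set Ω} (hA : MeasurableSet A) (θ : ℝ) :
    mgf (A.indicator 1) μ θ ≤ exp ((exp θ - 1) * μ.real A) := by
  rw [mgf_indicator_one hA, add_comm]
  exact add_one_le_exp _

theorem measureReal_sum_indicator_le_le {A : ι → Set Ω} (hA : ∀ i, MeasurableSet (A i))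
    (hind : iIndepSet A μ) (s : Finset ι) {θ : ℝ} (hθ : θ ≤ 0) (x : ℝ) :
    μ.real {ω | ∑ i ∈ s, (A i).indicator 1 ω ≤ x} ≤
      exp (-θ * x + (exp θ - 1) * ∑ i ∈ s, μ.real (A i)) := by
  have hX : iIndepFun (fun i ↦ (A i).indicator (1 : Ω → ℝ)) μ := hind.iIndepFun_indicator
  have hmeas : ∀ i, Measurable ((A i).indicator (1 : Ω → ℝ)) :=
    fun i ↦ measurable_const.indicator (hA i)
  have hint : Integrable (fun ω ↦ exp (θ * (∑ i ∈ s, (A i).indicator 1) ω)) μ :=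
    hX.integrable_exp_mul_sum hmeas fun i _ ↦ by
      simp only [exp_mul_indicator_one]
      exact (integrable_const 1).add (((integrable_const 1).indicator (hA i)).const_mul _)
  calc μ.real {ω | ∑ i ∈ s, (A i).indicator 1 ω ≤ x}
      ≤ exp (-θ * x) * mgf (∑ i ∈ s, (A i).indicator 1) μ θ := by
        simpa only [Finset.sum_apply] using measure_le_le_exp_mul_mgf x hθ hint
    _ = exp (-θ * x) * ∏ i ∈ s, mgf ((A i).indicator 1) μ θ := by rw [hX.mgf_sum hmeas]
    _ ≤ exp (-θ * x) * ∏ i ∈ s, exp ((exp θ - 1) * μ.real (A i)) := by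
        gcongr with i
        · exact fun i _ ↦ mgf_nonneg
        · exact mgf_indicator_one_le_exp (hA i) θ
    _ = exp (-θ * x + (exp θ - 1) * ∑ i ∈ s, μ.real (A i)) := by
        rw [← exp_sum, ← exp_add, mul_sum]

theorem measureReal_sum_indicator_le_half_le {A : ι → Set Ω} (hA : ∀ i, MeasurableSet (A i))
    (hind : iIndepSet A μ) (s : Finset ι) :
    μ.real {ω | ∑ i ∈ s, (A i).indicator 1 ω ≤ (∑ i ∈ s, μ.real (A i)) / 2} ≤
      exp (-((∑ i ∈ s, μ.real (A i)) / 2) / 5) := by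
  set m := ∑ i ∈ s, μ.real (A i)
  have hm : 0 ≤ m := sum_nonneg fun i _ ↦ measureReal_nonneg
  have hθ : -log 2 ≤ 0 := neg_nonpos.2 (log_nonneg one_le_two)
  refine (measureReal_sum_indicator_le_le hA hind s hθ _).trans ?_
  rw [exp_neg, exp_log two_pos]
  gcongr
  nlinarith [log_two_lt_d9]

lemma one_sub_card_mul_le_measure_forall {P : ι → Ω → Prop}
    (s : Finset ι) {δ : ℝ≥0∞} (h : ∀ i ∈ s, μ {ω | ¬ P i ω} ≤ δ) :
    1 - #s * δ ≤ μ {ω | ∀ i ∈ s, P i ω} := by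
  set G := {ω | ∀ i ∈ s, P i ω}
  have hGc : μ Gᶜ ≤ #s * δ := calc
    μ Gᶜ ≤ μ (⋃ i ∈ s, {ω | ¬ P i ω}) := measure_mono fun ω hω ↦ by simpa [G] using hω
    _ ≤ ∑ i ∈ s, μ {ω | ¬ P i ω} := measure_biUnion_finset_le _ _
    _ ≤ #s * δ := by simpa using sum_le_sum h
  rw [tsub_le_iff_right]
  calc 1 = μ (G ∪ Gᶜ) := by rw [Set.union_compl_self, measure_univ]
    _ ≤ μ G + μ Gᶜ := measure_union_le _ _
    _ ≤ μ G + #s * δ := by gcongr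

end

theorem random_selection_counts_lower_bound_general
    {Ω : Type*} [MeasurableSpace Ω] (μ : Measure Ω) [IsProbabilityMeasure μ]
    (K t : ℕ)
    (ε : Fin t → ℝ) (hε : ∀ n, ε n ∈ Set.Ioc (0 : ℝ) 1)
    (J : Fin t → Ω → ℕ) (hJmeas : ∀ n, Measurable (J n))
    (hJa : ∀ n, ∀ a ∈ Finset.Icc 1 K, μ {ω | J n ω = a} = ENNReal.ofReal (ε n / K))
    (hindep : iIndepFun J μ)
    (x : ℝ) (hx : x = (1 / (2 * K)) * ∑ n, ε n) :
    ENNReal.ofReal (1 - K * Real.exp (-x / 5)) ≤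
      μ {ω | ∀ a ∈ Finset.Icc 1 K,
        x ≤ ((Finset.univ.filter fun n : Fin t => J n ω = a).card : ℝ)} := by
  have hmean : ∀ a ∈ Finset.Icc 1 K, (∑ n, μ.real {ω | J n ω = a}) / 2 = x := fun a ha ↦ by
    simp only [measureReal_def, hJa _ a ha,
      ENNReal.toReal_ofReal (div_nonneg (hε _).1.le K.cast_nonneg), ← sum_div, hx]
    ring
  have harm : ∀ a ∈ Finset.Icc 1 K,
      μ {ω | ¬ x ≤ ((Finset.univ.filter fun n : Fin t => J n ω = a).card : ℝ)} ≤
        ENNReal.ofReal (exp (-x / 5)) := fun a ha ↦ by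
    have h := measureReal_sum_indicator_le_half_le (A := fun n ↦ {ω | J n ω = a})
      (fun n ↦ hJmeas n (measurableSet_singleton a))
      (hindep.iIndepSet_preimage hJmeas fun _ ↦ measurableSet_singleton a) univ
    rw [hmean a ha] at h
    refine (measure_mono fun ω hω ↦ ?_).trans
      ((ENNReal.le_ofReal_iff_toReal_le (measure_ne_top _ _) (exp_pos _).le).2 h)
    exact (natCast_card_filter_eq_sum_indicator univ (fun n ω ↦ J n ω = a) ω).symm.trans_le
      (not_le.1 hω).le
  calc ENNReal.ofReal (1 - K * exp (-x / 5))
      ≤ 1 - #(Finset.Icc 1 K) * ENNReal.ofReal (exp (-x / 5)) := by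
        rw [Nat.card_Icc, Nat.add_sub_cancel, ENNReal.ofReal_sub _ (by positivity),
          ENNReal.ofReal_one, ENNReal.ofReal_mul K.cast_nonneg, ENNReal.ofReal_natCast]
    _ ≤ _ := one_sub_card_mul_le_measure_forall _ harm

/-- with probability at least `1 - K·exp(-x_t/5)`, every arm
`a ∈ {1,…,K}` has been chosen by the random selection at least `x_t` times. -/
theorem random_selection_counts_lower_bound
    {Ω : Type*} [MeasurableSpace Ω] (μ : Measure Ω) [IsProbabilityMeasure μ]
    (K t : ℕ) (hK : 1 ≤ K) (ht : 1 ≤ t)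
    (ε : Fin t → ℝ) (hε : ∀ n, ε n ∈ Set.Ioc (0 : ℝ) 1)
    (J : Fin t → Ω → ℕ) (hJmeas : ∀ n, Measurable (J n))
    (hJval : ∀ n ω, J n ω ≤ K)
    (hJa : ∀ n, ∀ a ∈ Finset.Icc 1 K, μ {ω | J n ω = a} = ENNReal.ofReal (ε n / K))
    (hJzero : ∀ n, μ {ω | J n ω = 0} = 1 - ENNReal.ofReal (ε n))
    (hindep : iIndepFun J μ)
    (x : ℝ) (hx : x = (1 / (2 * K)) * ∑ n, ε n) :
    ENNReal.ofReal (1 - K * Real.exp (-x / 5)) ≤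
      μ {ω | ∀ a ∈ Finset.Icc 1 K,
        x ≤ ((Finset.univ.filter fun n : Fin t => J n ω = a).card : ℝ)} :=
  random_selection_counts_lower_bound_general μ K t ε hε J hJmeas hJa hindep x hx
end

section
/- Let x > 0 and let m, m' be integers with m ≥ x and m' ≥ x. Let X_1, …, X_m be i.i.d. random variables with values in [0,1] and mean μ, let X'_1, …, X'_{m'} be i.i.d. random variables with values in [0,1] and mean μ', and suppose the two families are independent of each other. Assume μ' > μ and set Δ = μ' − μ. Then P( (1/m) Σ_{i=1}^m X_i > (1/m') Σ_{i=1}^{m'} X'_i ) ≤ 2·exp(−Δ²x/2). -/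
/-!
Rather than a union bound over the two arms, treat both samples at once: with
`Z = Sum.elim X X'` and weights `c = 1/m` on the worse arm and `c = -1/m'` on the better one,
the difference of the empirical means is `∑ c k Z k`, a weighted sum of independent
`[0,1]`-valued variables with mean `-Δ`. Hoeffding's inequality with
`∑ c k ^ 2 = 1/m + 1/m' ≤ 2/x` bounds the probability that it is positive by
`exp (-2Δ² / (1/m + 1/m')) ≤ exp (-Δ²x)`.
-/

open MeasureTheory ProbabilityTheory Real
open scoped NNReal

section Hoeffding

variable {Ω : Type*} [MeasurableSpace Ω] {P : Measure Ω} [IsProbabilityMeasure P]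

theorem measureReal_sum_mul_sub_integral_ge_le {ι : Type*} [Fintype ι] {Z : ι → Ω → ℝ}
    (hindep : iIndepFun Z P) (hmeas : ∀ k, AEMeasurable (Z k) P)
    (hZ : ∀ k, ∀ᵐ ω ∂P, Z k ω ∈ Set.Icc 0 1) (c : ι → ℝ) {ε : ℝ} (hε : 0 ≤ ε) :
    P.real {ω | ε ≤ ∑ k, c k * (Z k ω - P[Z k])} ≤ exp (-2 * ε ^ 2 / ∑ k, c k ^ 2) := by
  have hindep' : iIndepFun (fun k ω => c k * (Z k ω - P[Z k])) P :=
    hindep.comp (fun k (y : ℝ) => c k * (y - ∫ ω, Z k ω ∂P)) fun _ => by fun_prop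
  have hsubG (k : ι) :
      HasSubgaussianMGF (fun ω => c k * (Z k ω - P[Z k])) (‖c k‖₊ ^ 2 / 4) P := by
    convert (hasSubgaussianMGF_of_mem_Icc (hmeas k) (hZ k)).const_mul (c k) using 2
    ext
    -- `const_mul` states its constant through a bare subtype element that `simp` does not unfold
    change _ = c k ^ 2 * (((‖(1 : ℝ) - 0‖₊ / 2) ^ 2 : ℝ≥0) : ℝ)
    simp
    ring
  calc _ ≤ _ := HasSubgaussianMGF.measure_sum_ge_le_of_iIndepFun hindep' (fun k _ => hsubG k) hε
    _ = _ := by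
      push_cast
      simp only [norm_eq_abs, sq_abs, ← Finset.sum_div]
      ring_nf

theorem measureReal_empiricalMean_lt_le {ι ι' : Type*} [Fintype ι] [Fintype ι'] [Nonempty ι]
    [Nonempty ι'] {X : ι → Ω → ℝ} {X' : ι' → Ω → ℝ} (hindep : iIndepFun (Sum.elim X X') P)
    (hXmeas : ∀ i, Measurable (X i)) (hX'meas : ∀ i, Measurable (X' i))
    (hXrange : ∀ i ω, X i ω ∈ Set.Icc (0 : ℝ) 1) (hX'range : ∀ i ω, X' i ω ∈ Set.Icc (0 : ℝ) 1)
    {μ₁ μ₂ : ℝ} (hXmean : ∀ i, ∫ ω, X i ω ∂P = μ₁) (hX'mean : ∀ i, ∫ ω, X' i ω ∂P = μ₂)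
    (hle : μ₁ ≤ μ₂) :
    P.real {ω | 1 / (Fintype.card ι' : ℝ) * ∑ i, X' i ω < 1 / (Fintype.card ι : ℝ) * ∑ i, X i ω}
      ≤ exp (-2 * (μ₂ - μ₁) ^ 2 / (1 / Fintype.card ι + 1 / Fintype.card ι')) := by
  set n : ℝ := (Fintype.card ι : ℝ)
  set n' : ℝ := (Fintype.card ι' : ℝ)
  set c : ι ⊕ ι' → ℝ := Sum.elim (fun _ => 1 / n) (fun _ => -1 / n')
  have hc : ∑ k, c k ^ 2 = 1 / n + 1 / n' := by
    simp only [one_div, Fintype.sum_sum_type, Sum.elim_inl, Sum.elim_inr, inv_pow,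
      Finset.sum_const, Finset.card_univ, nsmul_eq_mul, c, n, n']
    field_simp
  have hsub : {ω | 1 / n' * ∑ i, X' i ω < 1 / n * ∑ i, X i ω} ⊆
      {ω | μ₂ - μ₁ ≤ ∑ k, c k * (Sum.elim X X' k ω - P[Sum.elim X X' k])} := by
    intro ω hω
    have hexpand : ∑ k, c k * (Sum.elim X X' k ω - P[Sum.elim X X' k]) =
        (1 / n * ∑ i, X i ω - μ₁) - (1 / n' * ∑ i, X' i ω - μ₂) := by
      simp only [one_div, Fintype.sum_sum_type, Sum.elim_inl, Sum.elim_inr, hXmean, hX'mean,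
        ← Finset.mul_sum, Finset.sum_sub_distrib, Finset.sum_const, Finset.card_univ,
        nsmul_eq_mul, c, n, n']
      field_simp
      ring
    simp only [Set.mem_ofPred_eq, hexpand] at hω ⊢
    linarith
  calc _ ≤ _ := measureReal_mono hsub
    _ ≤ _ := measureReal_sum_mul_sub_integral_ge_le hindep
          (by rintro (i | j) <;> simp [(hXmeas _).aemeasurable, (hX'meas _).aemeasurable])
          (by rintro (i | j) <;> simp [hXrange, hX'range]) c (sub_nonneg.2 hle)
    _ = _ := by rw [hc]

end Hoeffding

theorem empirical_mean_comparison_general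
    {Ω : Type*} [MeasurableSpace Ω] (P : Measure Ω) [IsProbabilityMeasure P]
    (x : ℝ) (hx : 0 < x)
    (m m' : ℕ) (hm : x ≤ (m : ℝ)) (hm' : x ≤ (m' : ℝ))
    (μ₁ μ₂ : ℝ) (hlt : μ₁ < μ₂)
    (X : Fin m → Ω → ℝ) (X' : Fin m' → Ω → ℝ)
    (hXmeas : ∀ i, Measurable (X i)) (hX'meas : ∀ i, Measurable (X' i))
    (hXrange : ∀ i ω, X i ω ∈ Set.Icc (0 : ℝ) 1)
    (hX'range : ∀ i ω, X' i ω ∈ Set.Icc (0 : ℝ) 1)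
    (hXmean : ∀ i, ∫ ω, X i ω ∂P = μ₁)
    (hX'mean : ∀ i, ∫ ω, X' i ω ∂P = μ₂)
    (hindep : iIndepFun (Sum.elim X X') P) :
    P {ω | (1 / (m' : ℝ)) * ∑ i, X' i ω < (1 / (m : ℝ)) * ∑ i, X i ω} ≤
      ENNReal.ofReal (2 * Real.exp (-(μ₂ - μ₁) ^ 2 * x / 2)) := by
  have hm_pos : (0 : ℝ) < m := hx.trans_le hm
  have hm'_pos : (0 : ℝ) < m' := hx.trans_le hm'
  have : Nonempty (Fin m) := Fin.pos_iff_nonempty.1 (by exact_mod_cast hm_pos)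
  have : Nonempty (Fin m') := Fin.pos_iff_nonempty.1 (by exact_mod_cast hm'_pos)
  have hhoeffding := measureReal_empiricalMean_lt_le hindep hXmeas hX'meas hXrange hX'range
    hXmean hX'mean hlt.le
  simp only [Fintype.card_fin] at hhoeffding
  have hweights : x * (1 / m + 1 / m') ≤ 2 := by
    have h : x / m ≤ 1 := (div_le_one hm_pos).2 hm
    have h' : x / m' ≤ 1 := (div_le_one hm'_pos).2 hm'
    rw [mul_add, mul_one_div, mul_one_div]
    linarith
  have hexponent : -2 * (μ₂ - μ₁) ^ 2 / (1 / m + 1 / m') ≤ -(μ₂ - μ₁) ^ 2 * x / 2 := by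
    rw [div_le_iff₀ (by positivity)]
    nlinarith [sq_nonneg (μ₂ - μ₁)]
  rw [← ofReal_measureReal]
  refine ENNReal.ofReal_le_ofReal (hhoeffding.trans ?_)
  linarith [exp_le_exp.2 hexponent, exp_pos (-(μ₂ - μ₁) ^ 2 * x / 2)]

/-- per-pair comparison lemma.  The probability that the empirical
mean of the worse arm (true mean `μ₁`) exceeds the empirical mean of the better
arm (true mean `μ₂ > μ₁`) is at most `2·exp(-Δ²x/2)` with `Δ = μ₂ - μ₁`. -/
theorem empirical_mean_comparison
    {Ω : Type*} [MeasurableSpace Ω] (P : Measure Ω) [IsProbabilityMeasure P]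
    (x : ℝ) (hx : 0 < x)
    (m m' : ℕ) (hm : x ≤ (m : ℝ)) (hm' : x ≤ (m' : ℝ))
    (μ₁ μ₂ : ℝ) (hlt : μ₁ < μ₂)
    (X : Fin m → Ω → ℝ) (X' : Fin m' → Ω → ℝ)
    (hXmeas : ∀ i, Measurable (X i)) (hX'meas : ∀ i, Measurable (X' i))
    (hXrange : ∀ i ω, X i ω ∈ Set.Icc (0 : ℝ) 1)
    (hX'range : ∀ i ω, X' i ω ∈ Set.Icc (0 : ℝ) 1)
    (hXmean : ∀ i, ∫ ω, X i ω ∂P = μ₁)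
    (hX'mean : ∀ i, ∫ ω, X' i ω ∂P = μ₂)
    (hXid : ∀ i j, IdentDistrib (X i) (X j) P P)
    (hX'id : ∀ i j, IdentDistrib (X' i) (X' j) P P)
    (hindep : iIndepFun (Sum.elim X X') P) :
    P {ω | (1 / (m' : ℝ)) * ∑ i, X' i ω < (1 / (m : ℝ)) * ∑ i, X i ω} ≤
      ENNReal.ofReal (2 * Real.exp (-(μ₂ - μ₁) ^ 2 * x / 2)) :=
  empirical_mean_comparison_general P x hx m m' hm hm' μ₁ μ₂ hlt X X' hXmeas hX'meas hXrange
    hX'range hXmean hX'mean hindep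
end

section
/- Let A be a nonempty finite set of arms with |A| = K ≥ 2, let c ∈ ℝ, δ ≥ 0, and x > 0. For each a ∈ A let m_a ≥ x and m'_a ≥ x be integers; let X_{a,1}, …, X_{a,m_a} be i.i.d. [0,1]-valued with mean μ_a, and Y_{a,1}, …, Y_{a,m'_a} be i.i.d. [0,1]-valued with mean C_a, with all 2K families mutually independent. Assume ρ = min_{a ≠ b} |μ_a − μ_b| > 0 and that { a ∈ A : C_a ≤ c − δ } is nonempty. Let Â = { a ∈ A : Ȳ_a ≤ c } where Ȳ_a is the empirical mean cost, and let X̄_a be the empirical mean reward. Then with probability at least 1 − 2K·exp(−2δ²x) − 2K·exp(−ρ²x/2), the following holds: { a : C_a ≤ c − δ } ⊆ Â ⊆ { a : C_a ≤ c + δ } (so Â is a nonempty δ-feasible set), and every a* ∈ A with a* ∈ Â and X̄_{a*} = max_{a ∈ Â} X̄_a satisfies μ_{a*} = max_{a ∈ Â} μ_a; in particular a* maximizes the mean reward over some δ-feasible set of arms. -/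
open MeasureTheory ProbabilityTheory Real

/-!
Hoeffding's inequality shows that each empirical mean cost lies within `δ` of `C a` and each
empirical mean reward within `ρ / 2` of `μr a`, except with probability `2 exp (-2 δ² x)`, resp.
`2 exp (-ρ² x / 2)`, per arm; a union bound over the `K` arms controls the bad event. Off it, the
empirically feasible set is sandwiched between `{C ≤ c - δ}` and `{C ≤ c + δ}`, and since distinct
arms have rewards at least `ρ` apart, an empirical comparison `X̄ b ≤ X̄ a` forces `μr b ≤ μr a`.
-/

namespace ProbabilityTheory

variable {Ω ι : Type*} [MeasurableSpace Ω] {P : Measure Ω}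

lemma one_sub_measureReal_le_of_compl_subset [IsProbabilityMeasure P] {s t : Set Ω}
    (hst : sᶜ ⊆ t) : 1 - P.real s ≤ P.real t := by
  have h := measureReal_union_le (μ := P) s sᶜ
  rw [Set.union_compl_self, probReal_univ] at h
  linarith [measureReal_mono (μ := P) hst]

lemma HasSubgaussianMGF.measure_abs_sum_ge_le_of_iIndepFun {X : ι → Ω → ℝ}
    (h_indep : iIndepFun X P) {c : ι → NNReal} {s : Finset ι}
    (h_subG : ∀ i ∈ s, HasSubgaussianMGF (X i) (c i) P) {ε : ℝ} (hε : 0 ≤ ε) :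
    P.real {ω | ε ≤ |∑ i ∈ s, X i ω|} ≤ 2 * exp (-ε ^ 2 / (2 * ↑(∑ i ∈ s, c i))) := by
  have h_neg : P.real {ω | ε ≤ ∑ i ∈ s, -X i ω} ≤ exp (-ε ^ 2 / (2 * ↑(∑ i ∈ s, c i))) :=
    HasSubgaussianMGF.measure_sum_ge_le_of_iIndepFun (X := fun i => -X i)
      (h_indep.comp (fun _ => Neg.neg) fun _ => measurable_neg) (fun i hi => (h_subG i hi).neg) hε
  have h_split : {ω | ε ≤ |∑ i ∈ s, X i ω|} =
      {ω | ε ≤ ∑ i ∈ s, X i ω} ∪ {ω | ε ≤ ∑ i ∈ s, -X i ω} := by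
    ext ω
    simp [le_abs, Finset.sum_neg_distrib]
  rw [h_split, two_mul]
  exact (measureReal_union_le _ _).trans
    (add_le_add (HasSubgaussianMGF.measure_sum_ge_le_of_iIndepFun h_indep h_subG hε) h_neg)

variable [IsProbabilityMeasure P]

lemma measureReal_abs_sum_sub_integral_ge_le {X : ι → Ω → ℝ} (h_indep : iIndepFun X P)
    (hX : ∀ i, AEMeasurable (X i) P) (h01 : ∀ i, ∀ᵐ ω ∂P, X i ω ∈ Set.Icc 0 1)
    (s : Finset ι) {ε : ℝ} (hε : 0 ≤ ε) :
    P.real {ω | ε ≤ |∑ i ∈ s, (X i ω - P[X i])|} ≤ 2 * exp (-2 * ε ^ 2 / s.card) := by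
  have h_indep' : iIndepFun (fun i ω => X i ω - P[X i]) P := by
    exact h_indep.comp (fun i y => y - P[X i]) fun _ => measurable_id.sub_const _
  have h_param : -ε ^ 2 / (2 * ((∑ i ∈ s, (‖(1 : ℝ) - 0‖₊ / 2) ^ 2 : NNReal) : ℝ)) =
      -2 * ε ^ 2 / s.card := by
    simp only [sub_zero, nnnorm_one, Finset.sum_const, nsmul_eq_mul, NNReal.coe_mul,
      NNReal.coe_natCast, NNReal.coe_pow, NNReal.coe_div, NNReal.coe_one, NNReal.coe_ofNat]
    rcases s.card.eq_zero_or_pos with h | h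
    · simp [h]
    field_simp
  rw [← h_param]
  exact HasSubgaussianMGF.measure_abs_sum_ge_le_of_iIndepFun h_indep'
    (fun i _ => hasSubgaussianMGF_of_mem_Icc (hX i) (h01 i)) hε

lemma measureReal_abs_empiricalMean_sub_ge_le {n : ℕ} {X : Fin n → Ω → ℝ}
    (h_indep : iIndepFun X P) (hX : ∀ i, AEMeasurable (X i) P)
    (h01 : ∀ i, ∀ᵐ ω ∂P, X i ω ∈ Set.Icc 0 1) {m : ℝ} (hm : ∀ i, P[X i] = m)
    {ε : ℝ} (hε : 0 ≤ ε) :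
    P.real {ω | ε ≤ |1 / (n : ℝ) * ∑ i, X i ω - m|} ≤ 2 * exp (-2 * n * ε ^ 2) := by
  rcases n.eq_zero_or_pos with rfl | hn
  · simpa using (measureReal_le_one (μ := P)).trans one_le_two
  have h_mean (a : ℝ) : 1 / (n : ℝ) * a - m = (a - n * m) / n := by field_simp
  have h := measureReal_abs_sum_sub_integral_ge_le h_indep hX h01 Finset.univ
    (mul_nonneg n.cast_nonneg hε)
  simp only [hm, Finset.sum_sub_distrib, Finset.sum_const, Finset.card_univ, Fintype.card_fin,
    nsmul_eq_mul] at h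
  convert h using 3
  · ext ω
    rw [h_mean, abs_div, Nat.abs_cast, le_div_iff₀ (by positivity), mul_comm]
  · field_simp

end ProbabilityTheory

section Deterministic

variable {α : Type*}

def IsDeltaFeasibleSet (C : α → ℝ) (c δ : ℝ) (S : Set α) : Prop :=
  {a | C a ≤ c - δ} ⊆ S ∧ S ⊆ {a | C a ≤ c + δ}

lemma isDeltaFeasibleSet_setOf_le {C C' : α → ℝ} {c δ : ℝ} (h : ∀ a, |C' a - C a| ≤ δ) :
    IsDeltaFeasibleSet C c δ {a | C' a ≤ c} := by
  refine ⟨fun a ha => ?_, fun a ha => ?_⟩ <;>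
  · simp only [Set.mem_ofPred_eq] at ha ⊢
    linarith [abs_le.1 (h a)]

lemma le_of_estimate_le {μ μ' : α → ℝ} {ρ : ℝ} (hρ : ∀ a b, a ≠ b → ρ ≤ |μ a - μ b|)
    (hμ' : ∀ a, |μ' a - μ a| < ρ / 2) {a b : α} (hab : μ' b ≤ μ' a) : μ b ≤ μ a := by
  by_contra! hlt
  have h_gap := hρ a b (fun h => hlt.ne (h ▸ rfl))
  rw [abs_sub_comm, abs_of_pos (sub_pos.2 hlt)] at h_gap
  linarith [abs_lt.1 (hμ' a), abs_lt.1 (hμ' b)]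

end Deterministic

theorem constrained_greedy_static_core_general
    {Ω : Type*} [MeasurableSpace Ω] (P : Measure Ω) [IsProbabilityMeasure P]
    {α : Type*} [Fintype α] [DecidableEq α] (K : ℕ) (hK : Fintype.card α = K)
    (c δ x : ℝ) (hδ : 0 ≤ δ)
    (m m' : α → ℕ) (hm : ∀ a, x ≤ (m a : ℝ)) (hm' : ∀ a, x ≤ (m' a : ℝ))
    (μr C : α → ℝ)
    (hne : (Finset.univ.offDiag : Finset (α × α)).Nonempty)
    (ρ : ℝ) (hρ : ρ = Finset.univ.offDiag.inf' hne fun p => |μr p.1 - μr p.2|)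
    (hρpos : 0 < ρ)
    (hfeas : {a : α | C a ≤ c - δ}.Nonempty)
    (X : (a : α) → Fin (m a) → Ω → ℝ) (Y : (a : α) → Fin (m' a) → Ω → ℝ)
    (hXmeas : ∀ a i, Measurable (X a i)) (hYmeas : ∀ a i, Measurable (Y a i))
    (hXrange : ∀ a i ω, X a i ω ∈ Set.Icc (0 : ℝ) 1)
    (hYrange : ∀ a i ω, Y a i ω ∈ Set.Icc (0 : ℝ) 1)
    (hXmean : ∀ a i, ∫ ω, X a i ω ∂P = μr a)
    (hYmean : ∀ a i, ∫ ω, Y a i ω ∂P = C a)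
    (hindep : iIndepFun
      (Sum.elim (fun p : Σ a : α, Fin (m a) => X p.1 p.2)
                (fun p : Σ a : α, Fin (m' a) => Y p.1 p.2)) P) :
    ENNReal.ofReal
        (1 - 2 * K * Real.exp (-2 * δ ^ 2 * x) - 2 * K * Real.exp (-ρ ^ 2 * x / 2)) ≤
      P {ω |
        ({a : α | C a ≤ c - δ} ⊆ {a : α | (1 / (m' a : ℝ)) * ∑ i, Y a i ω ≤ c} ∧
         {a : α | (1 / (m' a : ℝ)) * ∑ i, Y a i ω ≤ c} ⊆ {a : α | C a ≤ c + δ}) ∧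
        {a : α | (1 / (m' a : ℝ)) * ∑ i, Y a i ω ≤ c}.Nonempty ∧
        ∀ a ∈ {a : α | (1 / (m' a : ℝ)) * ∑ i, Y a i ω ≤ c},
          (∀ b ∈ {a : α | (1 / (m' a : ℝ)) * ∑ i, Y a i ω ≤ c},
            (1 / (m b : ℝ)) * ∑ i, X b i ω ≤ (1 / (m a : ℝ)) * ∑ i, X a i ω) →
          ∀ b ∈ {a : α | (1 / (m' a : ℝ)) * ∑ i, Y a i ω ≤ c}, μr b ≤ μr a} := by
  have h_gap (a b : α) (hab : a ≠ b) : ρ ≤ |μr a - μr b| :=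
    hρ ▸ Finset.inf'_le (fun p : α × α => |μr p.1 - μr p.2|) (b := (a, b)) (by simpa using hab)
  have h_indepX (a : α) : iIndepFun (X a) P :=
    hindep.precomp (g := Sum.inl ∘ Sigma.mk a) (Sum.inl_injective.comp sigma_mk_injective)
  have h_indepY (a : α) : iIndepFun (Y a) P :=
    hindep.precomp (g := Sum.inr ∘ Sigma.mk a) (Sum.inr_injective.comp sigma_mk_injective)
  set bad : α → Set Ω := fun a =>
    {ω | δ ≤ |1 / (m' a : ℝ) * ∑ i, Y a i ω - C a|} ∪
      {ω | ρ / 2 ≤ |1 / (m a : ℝ) * ∑ i, X a i ω - μr a|}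
  have h_bad (a : α) :
      P.real (bad a) ≤ 2 * exp (-2 * δ ^ 2 * x) + 2 * exp (-ρ ^ 2 * x / 2) := by
    refine (measureReal_union_le _ _).trans (add_le_add ?_ ?_)
    · refine (measureReal_abs_empiricalMean_sub_ge_le (h_indepY a)
        (fun i => (hYmeas a i).aemeasurable) (fun i => ae_of_all _ (hYrange a i))
        (hYmean a) hδ).trans ?_
      gcongr 2 * exp ?_
      nlinarith [hm' a, sq_nonneg δ]
    · refine (measureReal_abs_empiricalMean_sub_ge_le (h_indepX a)
        (fun i => (hXmeas a i).aemeasurable) (fun i => ae_of_all _ (hXrange a i))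
        (hXmean a) (by positivity)).trans ?_
      gcongr 2 * exp ?_
      nlinarith [hm a, sq_nonneg ρ]
  rw [ENNReal.ofReal_le_iff_le_toReal (measure_ne_top _ _)]
  refine le_trans ?_ (one_sub_measureReal_le_of_compl_subset (s := ⋃ a, bad a) ?_)
  · have h_union := (measureReal_iUnion_fintype_le bad).trans (Finset.sum_le_sum fun a _ => h_bad a)
    simp only [Finset.sum_const, Finset.card_univ, hK, nsmul_eq_mul] at h_union
    linarith
  · intro ω hω
    simp only [bad, Set.compl_iUnion, Set.mem_iInter, Set.compl_union, Set.mem_inter_iff,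
      Set.mem_compl_iff, Set.mem_ofPred_eq, not_le] at hω
    have h_feasible := isDeltaFeasibleSet_setOf_le (c := c) fun a => (hω a).1.le
    exact ⟨h_feasible, hfeas.mono h_feasible.1,
      fun a _ h_max b hb => le_of_estimate_le h_gap (fun a => (hω a).2) (h_max b hb)⟩

/-- static core of the main theorem.  With at least `x` reward and
`x` cost samples per arm, with probability at least
`1 - 2K·exp(-2δ²x) - 2K·exp(-ρ²x/2)` the empirically feasible set `Â` is a
(nonempty) `δ`-feasible set and every empirically-best arm of `Â` maximizes the
true mean reward over `Â`. -/
theorem constrained_greedy_static_core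
    {Ω : Type*} [MeasurableSpace Ω] (P : Measure Ω) [IsProbabilityMeasure P]
    {α : Type*} [Fintype α] [DecidableEq α] (K : ℕ) (hK : Fintype.card α = K) (hK2 : 2 ≤ K)
    (c δ x : ℝ) (hδ : 0 ≤ δ) (hx : 0 < x)
    (m m' : α → ℕ) (hm : ∀ a, x ≤ (m a : ℝ)) (hm' : ∀ a, x ≤ (m' a : ℝ))
    (μr C : α → ℝ)
    (hne : (Finset.univ.offDiag : Finset (α × α)).Nonempty)
    (ρ : ℝ) (hρ : ρ = Finset.univ.offDiag.inf' hne fun p => |μr p.1 - μr p.2|)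
    (hρpos : 0 < ρ)
    (hfeas : {a : α | C a ≤ c - δ}.Nonempty)
    (X : (a : α) → Fin (m a) → Ω → ℝ) (Y : (a : α) → Fin (m' a) → Ω → ℝ)
    (hXmeas : ∀ a i, Measurable (X a i)) (hYmeas : ∀ a i, Measurable (Y a i))
    (hXrange : ∀ a i ω, X a i ω ∈ Set.Icc (0 : ℝ) 1)
    (hYrange : ∀ a i ω, Y a i ω ∈ Set.Icc (0 : ℝ) 1)
    (hXmean : ∀ a i, ∫ ω, X a i ω ∂P = μr a)
    (hYmean : ∀ a i, ∫ ω, Y a i ω ∂P = C a)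
    (hXid : ∀ a i j, IdentDistrib (X a i) (X a j) P P)
    (hYid : ∀ a i j, IdentDistrib (Y a i) (Y a j) P P)
    (hindep : iIndepFun
      (Sum.elim (fun p : Σ a : α, Fin (m a) => X p.1 p.2)
                (fun p : Σ a : α, Fin (m' a) => Y p.1 p.2)) P) :
    ENNReal.ofReal
        (1 - 2 * K * Real.exp (-2 * δ ^ 2 * x) - 2 * K * Real.exp (-ρ ^ 2 * x / 2)) ≤
      P {ω |
        ({a : α | C a ≤ c - δ} ⊆ {a : α | (1 / (m' a : ℝ)) * ∑ i, Y a i ω ≤ c} ∧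
         {a : α | (1 / (m' a : ℝ)) * ∑ i, Y a i ω ≤ c} ⊆ {a : α | C a ≤ c + δ}) ∧
        {a : α | (1 / (m' a : ℝ)) * ∑ i, Y a i ω ≤ c}.Nonempty ∧
        ∀ a ∈ {a : α | (1 / (m' a : ℝ)) * ∑ i, Y a i ω ≤ c},
          (∀ b ∈ {a : α | (1 / (m' a : ℝ)) * ∑ i, Y a i ω ≤ c},
            (1 / (m b : ℝ)) * ∑ i, X b i ω ≤ (1 / (m a : ℝ)) * ∑ i, X a i ω) →
          ∀ b ∈ {a : α | (1 / (m' a : ℝ)) * ∑ i, Y a i ω ≤ c}, μr b ≤ μr a} :=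
  constrained_greedy_static_core_general P K hK c δ x hδ m m' hm hm' μr C hne ρ hρ hρpos hfeas X Y
    hXmeas hYmeas hXrange hYrange hXmean hYmean hindep
end
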